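/- arXiv:2107.08250 — 3 statements merged into one kernel-verified Lean document; each statement's English description precedes it below -/
import Mathlib

section
/- Let p > 2 be a prime, G = GL_2(F_p), H = {[[1,*],[0,*]]} and H' = {[[*,*],[0,1]]}. Then the permutation characters of G on G/H and G/H' are equal; equivalently, for every g ∈ G, the number of left cosets of H fixed by g equals the number of left cosets of H' fixed by g. -/
set_option synthInstance.maxHeartbeats 1000000

open Matrix

variable (p : ℕ) [Fact p.Prime]

/-- The subgroup of `GL₂(𝔽_p)` of matrices of the form `[[1,*],[0,*]]`. -/
def Hsub : Subgroup (GL (Fin 2) (ZMod p)) where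
  carrier := {g | g.val 0 0 = 1 ∧ g.val 1 0 = 0}
  one_mem' := by simp
  mul_mem' := by
    rintro a b ⟨ha1, ha2⟩ ⟨hb1, hb2⟩
    constructor <;>
      simp [Units.val_mul, Matrix.mul_apply, Fin.sum_univ_two, ha1, ha2, hb1, hb2]
  inv_mem' := by
    rintro a ⟨ha1, ha2⟩
    have h : a⁻¹.val * a.val = 1 := by rw [← Units.val_mul, inv_mul_cancel, Units.val_one]
    constructor
    · have h00 : (a⁻¹.val * a.val) 0 0 = (1 : Matrix (Fin 2) (Fin 2) (ZMod p)) 0 0 := by rw [h]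
      simpa [Matrix.mul_apply, Fin.sum_univ_two, ha1, ha2] using h00
    · have h10 : (a⁻¹.val * a.val) 1 0 = (1 : Matrix (Fin 2) (Fin 2) (ZMod p)) 1 0 := by rw [h]
      simpa [Matrix.mul_apply, Fin.sum_univ_two, ha1, ha2] using h10

/-- The subgroup of `GL₂(𝔽_p)` of matrices of the form `[[*,*],[0,1]]`. -/
def Hsub' : Subgroup (GL (Fin 2) (ZMod p)) where
  carrier := {g | g.val 1 0 = 0 ∧ g.val 1 1 = 1}
  one_mem' := by simp
  mul_mem' := by
    rintro a b ⟨ha1, ha2⟩ ⟨hb1, hb2⟩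
    constructor <;>
      simp [Units.val_mul, Matrix.mul_apply, Fin.sum_univ_two, ha1, ha2, hb1, hb2]
  inv_mem' := by
    rintro a ⟨ha1, ha2⟩
    have h : a.val * a⁻¹.val = 1 := by rw [← Units.val_mul, mul_inv_cancel, Units.val_one]
    constructor
    · have h10 : (a.val * a⁻¹.val) 1 0 = (1 : Matrix (Fin 2) (Fin 2) (ZMod p)) 1 0 := by rw [h]
      simpa [Matrix.mul_apply, Fin.sum_univ_two, ha1, ha2] using h10
    · have h11 : (a.val * a⁻¹.val) 1 1 = (1 : Matrix (Fin 2) (Fin 2) (ZMod p)) 1 1 := by rw [h]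
      simpa [Matrix.mul_apply, Fin.sum_univ_two, ha1, ha2] using h11


open Matrix

section Aux

variable {p : ℕ} [Fact p.Prime]

abbrev GLp (p : ℕ) := GL (Fin 2) (ZMod p)

/-- first column of a matrix in GL₂ -/
def colv (x : GLp p) : Fin 2 → ZMod p := x.val *ᵥ ![1, 0]

/-- second row of the inverse -/
def rowv (x : GLp p) : Fin 2 → ZMod p := ![0, 1] ᵥ* (x⁻¹).val

lemma mulVec_e1 (M : Matrix (Fin 2) (Fin 2) (ZMod p)) :
    M *ᵥ ![1, 0] = fun i => M i 0 := by
  funext i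
  simp [Matrix.mulVec, dotProduct, Fin.sum_univ_two]

lemma vecMul_e2 (M : Matrix (Fin 2) (Fin 2) (ZMod p)) :
    ![0, 1] ᵥ* M = fun j => M 1 j := by
  funext j
  simp [Matrix.vecMul, dotProduct, Fin.sum_univ_two]

lemma colv_mul (a b : GLp p) : colv (a * b) = a.val *ᵥ colv b := by
  simp [colv, Units.val_mul, Matrix.mulVec_mulVec, Matrix.mul_apply, Fin.sum_univ_two]

lemma colv_one : colv (1 : GLp p) = ![1, 0] := by
  simp [colv]

lemma mem_Hsub_iff {h : GLp p} : h ∈ Hsub p ↔ colv h = ![1, 0] := by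
  rw [colv, mulVec_e1]
  constructor
  · rintro ⟨h1, h2⟩
    funext i
    fin_cases i <;> simp [h1, h2]
  · intro hc
    constructor
    · have := congrFun hc 0; simpa using this
    · have := congrFun hc 1; simpa using this

lemma mem_Hsub'_iff {h : GLp p} : h ∈ Hsub' p ↔ ![0, 1] ᵥ* h.val = ![0, 1] := by
  rw [vecMul_e2]
  constructor
  · rintro ⟨h1, h2⟩
    funext j
    fin_cases j <;> simp [h1, h2]
  · intro hc
    constructor
    · have := congrFun hc 0; simpa using this
    · have := congrFun hc 1; simpa using this

lemma colv_welldef {a b : GLp p} (h : a⁻¹ * b ∈ Hsub p) : colv b = colv a := by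
  have : colv (a * (a⁻¹ * b)) = a.val *ᵥ colv (a⁻¹ * b) := colv_mul _ _
  rw [mem_Hsub_iff.mp h] at this
  rw [mul_inv_cancel_left] at this
  exact this

lemma rowv_welldef {a b : GLp p} (h : a⁻¹ * b ∈ Hsub' p) : rowv b = rowv a := by
  have hb : b⁻¹ = (a⁻¹ * b)⁻¹ * a⁻¹ := by group
  have : rowv b = (![0, 1] ᵥ* ((a⁻¹ * b)⁻¹).val) ᵥ* (a⁻¹).val := by
    rw [rowv, hb, Units.val_mul, Matrix.vecMul_vecMul]
  rw [mem_Hsub'_iff.mp (inv_mem h)] at this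
  simpa [rowv] using this

end Aux

section Main

variable {p : ℕ} [Fact p.Prime]

lemma colv_ne_zero (x : GLp p) : colv x ≠ 0 := by
  intro h0
  have h1 : colv ((x⁻¹) * x) = (x⁻¹).val *ᵥ colv x := colv_mul _ _
  rw [h0, inv_mul_cancel, colv_one, Matrix.mulVec_zero] at h1
  have := congrFun h1 0
  simp at this

lemma rowv_ne_zero (x : GLp p) : rowv x ≠ 0 := by
  intro h0
  have h1 : rowv x ᵥ* x.val = ![0, 1] ᵥ* ((x⁻¹).val * x.val) := by
    rw [rowv, Matrix.vecMul_vecMul]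
  rw [h0, Matrix.zero_vecMul, ← Units.val_mul, inv_mul_cancel, Units.val_one,
    Matrix.vecMul_one] at h1
  have := congrFun h1 1
  simp at this

lemma cardH (g : GLp p) :
    Nat.card {x : GLp p ⧸ Hsub p // g • x = x}
      = Nat.card {v : Fin 2 → ZMod p // g.val *ᵥ v = v ∧ v ≠ 0} := by
  have wd : ∀ a b : GLp p, (QuotientGroup.leftRel (Hsub p)) a b → colv a = colv b :=
    fun a b hab => (colv_welldef (QuotientGroup.leftRel_apply.mp hab)).symm
  let colQ : GLp p ⧸ Hsub p → (Fin 2 → ZMod p) := Quotient.lift colv wd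
  have colQ_mk : ∀ x : GLp p, colQ (QuotientGroup.mk x) = colv x := fun _ => rfl
  have fix_iff : ∀ x : GLp p,
      (g • (QuotientGroup.mk x : GLp p ⧸ Hsub p) = QuotientGroup.mk x)
        ↔ (g * x)⁻¹ * x ∈ Hsub p := by
    intro x
    rw [MulAction.Quotient.smul_mk, smul_eq_mul, QuotientGroup.eq]
  have key : ∀ q : GLp p ⧸ Hsub p, g • q = q → g.val *ᵥ colQ q = colQ q := by
    intro q
    induction q using QuotientGroup.induction_on with
    | H x =>
      intro hq
      have hm := (fix_iff x).mp hq
      have h1 : colv x = colv (g * x) := colv_welldef hm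
      rw [colv_mul] at h1
      rw [colQ_mk]
      exact h1.symm
  have keyne : ∀ q : GLp p ⧸ Hsub p, colQ q ≠ 0 := by
    intro q
    induction q using QuotientGroup.induction_on with
    | H x => exact colv_ne_zero x
  refine Nat.card_eq_of_bijective
    (fun x => ⟨colQ x.1, key x.1 x.2, keyne x.1⟩) ⟨?_, ?_⟩
  · rintro ⟨q1, hq1⟩ ⟨q2, hq2⟩ h
    have h' : colQ q1 = colQ q2 := congrArg Subtype.val h
    apply Subtype.ext
    show q1 = q2
    clear h hq1 hq2
    induction q1 using QuotientGroup.induction_on with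
    | H a =>
      induction q2 using QuotientGroup.induction_on with
      | H b =>
        rw [colQ_mk, colQ_mk] at h'
        apply QuotientGroup.eq.mpr
        rw [mem_Hsub_iff]
        have : colv (a⁻¹ * b) = (a⁻¹).val *ᵥ colv b := colv_mul _ _
        rw [this, ← h', ← colv_mul, inv_mul_cancel, colv_one]
  · rintro ⟨v, hv1, hv2⟩
    -- build X ∈ GL with first column v
    obtain ⟨A, hdet, hcol⟩ : ∃ A : Matrix (Fin 2) (Fin 2) (ZMod p),
        A.det ≠ 0 ∧ A *ᵥ ![1, 0] = v := by
      by_cases h0 : v 0 = 0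
      · have h1 : v 1 ≠ 0 := by
          intro h1
          apply hv2
          funext i; fin_cases i <;> simp [h0, h1]
        refine ⟨!![v 0, 1; v 1, 0], ?_, ?_⟩
        · rw [Matrix.det_fin_two_of]; simpa [h0] using h1
        · rw [mulVec_e1]; funext i; fin_cases i <;> simp
      · refine ⟨!![v 0, 0; v 1, 1], ?_, ?_⟩
        · rw [Matrix.det_fin_two_of]; simpa using h0
        · rw [mulVec_e1]; funext i; fin_cases i <;> simp
    have hA : IsUnit A := (Matrix.isUnit_iff_isUnit_det A).mpr (Ne.isUnit hdet)
    set X : GLp p := hA.unit with hX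
    have hXval : X.val = A := hA.unit_spec
    have hcolX : colv X = v := by rw [colv, hXval, hcol]
    have hginv : g⁻¹.val *ᵥ v = v := by
      conv_lhs => rw [← hv1]
      rw [Matrix.mulVec_mulVec, ← Units.val_mul, inv_mul_cancel, Units.val_one,
        Matrix.one_mulVec]
    have hfix : g • (QuotientGroup.mk X : GLp p ⧸ Hsub p) = QuotientGroup.mk X := by
      rw [fix_iff]
      rw [mem_Hsub_iff]
      have h2 : colv ((g * X)⁻¹ * X) = ((g * X)⁻¹).val *ᵥ colv X := colv_mul _ _
      rw [h2, hcolX, _root_.mul_inv_rev, Units.val_mul, ← Matrix.mulVec_mulVec, hginv,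
        ← hcolX, ← colv_mul, inv_mul_cancel, colv_one]
    exact ⟨⟨QuotientGroup.mk X, hfix⟩, by
      apply Subtype.ext
      simpa [colQ_mk] using hcolX⟩

end Main

section Main2

variable {p : ℕ} [Fact p.Prime]

lemma rowv_mul (a b : GLp p) : rowv (a * b) = rowv b ᵥ* (a⁻¹).val := by
  rw [rowv, _root_.mul_inv_rev, Units.val_mul, ← Matrix.vecMul_vecMul, rowv]

lemma rowv_vecMul_self (x : GLp p) : rowv x ᵥ* x.val = ![0, 1] := by
  rw [rowv, Matrix.vecMul_vecMul, ← Units.val_mul, inv_mul_cancel, Units.val_one,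
    Matrix.vecMul_one]

lemma cardH' (g : GLp p) :
    Nat.card {x : GLp p ⧸ Hsub' p // g • x = x}
      = Nat.card {v : Fin 2 → ZMod p // v ᵥ* g.val = v ∧ v ≠ 0} := by
  have wd : ∀ a b : GLp p, (QuotientGroup.leftRel (Hsub' p)) a b → rowv a = rowv b :=
    fun a b hab => (rowv_welldef (QuotientGroup.leftRel_apply.mp hab)).symm
  let rowQ : GLp p ⧸ Hsub' p → (Fin 2 → ZMod p) := Quotient.lift rowv wd
  have rowQ_mk : ∀ x : GLp p, rowQ (QuotientGroup.mk x) = rowv x := fun _ => rfl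
  have fix_iff : ∀ x : GLp p,
      (g • (QuotientGroup.mk x : GLp p ⧸ Hsub' p) = QuotientGroup.mk x)
        ↔ (g * x)⁻¹ * x ∈ Hsub' p := by
    intro x
    rw [MulAction.Quotient.smul_mk, smul_eq_mul, QuotientGroup.eq]
  have key : ∀ q : GLp p ⧸ Hsub' p, g • q = q → rowQ q ᵥ* g.val = rowQ q := by
    intro q
    induction q using QuotientGroup.induction_on with
    | H x =>
      intro hq
      have hm := (fix_iff x).mp hq
      have h1 : rowv x = rowv (g * x) := rowv_welldef hm
      rw [rowv_mul] at h1
      rw [rowQ_mk]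
      conv_lhs => rw [h1]
      rw [Matrix.vecMul_vecMul, ← Units.val_mul, inv_mul_cancel, Units.val_one,
        Matrix.vecMul_one]
  have keyne : ∀ q : GLp p ⧸ Hsub' p, rowQ q ≠ 0 := by
    intro q
    induction q using QuotientGroup.induction_on with
    | H x => exact rowv_ne_zero x
  refine Nat.card_eq_of_bijective
    (fun x => ⟨rowQ x.1, key x.1 x.2, keyne x.1⟩) ⟨?_, ?_⟩
  · rintro ⟨q1, hq1⟩ ⟨q2, hq2⟩ h
    have h' : rowQ q1 = rowQ q2 := congrArg Subtype.val h
    apply Subtype.ext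
    show q1 = q2
    clear h hq1 hq2
    induction q1 using QuotientGroup.induction_on with
    | H a =>
      induction q2 using QuotientGroup.induction_on with
      | H b =>
        rw [rowQ_mk, rowQ_mk] at h'
        apply QuotientGroup.eq.mpr
        rw [mem_Hsub'_iff]
        have h2 : ![0, 1] ᵥ* (a⁻¹ * b).val = (rowv a) ᵥ* b.val := by
          rw [Units.val_mul, ← Matrix.vecMul_vecMul]; rfl
        rw [h2, h', rowv_vecMul_self]
  · rintro ⟨w, hw1, hw2⟩
    obtain ⟨Y, hdet, hrow⟩ : ∃ Y : Matrix (Fin 2) (Fin 2) (ZMod p),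
        Y.det ≠ 0 ∧ ![0, 1] ᵥ* Y = w := by
      by_cases h1 : w 1 = 0
      · have h0 : w 0 ≠ 0 := by
          intro h0
          apply hw2
          funext i; fin_cases i <;> simp [h0, h1]
        refine ⟨!![0, 1; w 0, w 1], ?_, ?_⟩
        · rw [Matrix.det_fin_two_of]; simpa using h0
        · rw [vecMul_e2]; funext j; fin_cases j <;> simp
      · refine ⟨!![1, 0; w 0, w 1], ?_, ?_⟩
        · rw [Matrix.det_fin_two_of]; simpa using h1
        · rw [vecMul_e2]; funext j; fin_cases j <;> simp
    have hY : IsUnit Y := (Matrix.isUnit_iff_isUnit_det Y).mpr (Ne.isUnit hdet)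
    set X : GLp p := hY.unit⁻¹ with hX
    have hrowX : rowv X = w := by
      rw [rowv, hX, inv_inv, hY.unit_spec, hrow]
    have hginv : w ᵥ* g⁻¹.val = w := by
      conv_lhs => rw [← hw1]
      rw [Matrix.vecMul_vecMul, ← Units.val_mul, mul_inv_cancel, Units.val_one,
        Matrix.vecMul_one]
    have hfix : g • (QuotientGroup.mk X : GLp p ⧸ Hsub' p) = QuotientGroup.mk X := by
      rw [fix_iff, mem_Hsub'_iff]
      have h2 : ![0, 1] ᵥ* ((g * X)⁻¹ * X).val = (rowv (g * X)) ᵥ* X.val := by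
        rw [Units.val_mul, ← Matrix.vecMul_vecMul]; rfl
      rw [h2, rowv_mul, hrowX, hginv, ← hrowX, rowv_vecMul_self]
    exact ⟨⟨QuotientGroup.mk X, hfix⟩, by
      apply Subtype.ext
      simpa [rowQ_mk] using hrowX⟩

end Main2

section Count

variable {p : ℕ} [Fact p.Prime]

lemma card_ker_eq (N : Matrix (Fin 2) (Fin 2) (ZMod p)) :
    Nat.card {v : Fin 2 → ZMod p // N *ᵥ v = 0} = p ^ (2 - N.rank) := by
  have h1 : Nat.card {v : Fin 2 → ZMod p // N *ᵥ v = 0}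
      = Nat.card ↥(LinearMap.ker N.mulVecLin) :=
    Nat.card_congr (Equiv.subtypeEquivRight (fun v => by simp [LinearMap.mem_ker]))
  have h2 : Module.finrank (ZMod p) ↥(LinearMap.ker N.mulVecLin) = 2 - N.rank := by
    have h4 := LinearMap.finrank_range_add_finrank_ker N.mulVecLin
    have h3 : Module.finrank (ZMod p) (Fin 2 → ZMod p) = 2 := by simp
    have h5 : N.rank = Module.finrank (ZMod p) (LinearMap.range N.mulVecLin) := rfl
    rw [h3] at h4
    omega
  haveI : Fintype ↥(LinearMap.ker N.mulVecLin) := Fintype.ofFinite _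
  rw [h1, Nat.card_eq_fintype_card, Module.card_eq_pow_finrank (K := ZMod p), h2, ZMod.card]

lemma card_nonzero (P : (Fin 2 → ZMod p) → Prop) (hP0 : P 0) :
    Nat.card {v : Fin 2 → ZMod p // P v ∧ v ≠ 0}
      = Nat.card {v : Fin 2 → ZMod p // P v} - 1 := by
  have hs : {v : Fin 2 → ZMod p | P v ∧ v ≠ 0} = {v | P v} \ {0} := by
    ext v; simp [and_comm]
  have e1 : Nat.card {v : Fin 2 → ZMod p // P v ∧ v ≠ 0}
      = ({v : Fin 2 → ZMod p | P v} \ {0}).ncard := by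
    rw [← Nat.card_coe_set_eq, ← hs]; rfl
  have e2 : Nat.card {v : Fin 2 → ZMod p // P v}
      = ({v : Fin 2 → ZMod p | P v}).ncard := by
    rw [← Nat.card_coe_set_eq]; rfl
  rw [e1, e2, Set.ncard_diff_singleton_of_mem (s := {v : Fin 2 → ZMod p | P v}) (a := 0) hP0]

end Count

/-- Gassmann condition: equal permutation characters on the coset spaces. -/
theorem stmt1 (p : ℕ) [Fact p.Prime] (hp : 2 < p) (g : GL (Fin 2) (ZMod p)) :
    Nat.card {x : GL (Fin 2) (ZMod p) ⧸ Hsub p // g • x = x} =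
      Nat.card {x : GL (Fin 2) (ZMod p) ⧸ Hsub' p // g • x = x} := by
  rw [cardH g, cardH' g]
  set M : Matrix (Fin 2) (Fin 2) (ZMod p) := g.val - 1 with hM
  have hcol : ∀ v : Fin 2 → ZMod p, (g.val *ᵥ v = v) ↔ M *ᵥ v = 0 := by
    intro v
    rw [hM, Matrix.sub_mulVec, Matrix.one_mulVec, sub_eq_zero]
  have hrow : ∀ v : Fin 2 → ZMod p, (v ᵥ* g.val = v) ↔ Mᵀ *ᵥ v = 0 := by
    intro v
    rw [hM, Matrix.transpose_sub, Matrix.transpose_one, Matrix.sub_mulVec,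
      Matrix.one_mulVec, Matrix.mulVec_transpose, sub_eq_zero]
  have c1 : Nat.card {v : Fin 2 → ZMod p // g.val *ᵥ v = v}
      = Nat.card {v : Fin 2 → ZMod p // M *ᵥ v = 0} :=
    Nat.card_congr (Equiv.subtypeEquivRight hcol)
  have c2 : Nat.card {v : Fin 2 → ZMod p // v ᵥ* g.val = v}
      = Nat.card {v : Fin 2 → ZMod p // Mᵀ *ᵥ v = 0} :=
    Nat.card_congr (Equiv.subtypeEquivRight hrow)
  rw [card_nonzero _ (by rw [Matrix.mulVec_zero]),
      card_nonzero _ (by rw [Matrix.zero_vecMul]),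
      c1, c2, card_ker_eq, card_ker_eq, Matrix.rank_transpose]
end

section
/- Let q be a prime power and n ≥ 3. In G = GL_n(F_q), the stabilizer H of a nonzero vector e₁ ∈ F_q^n (for the standard action) and the stabilizer H' of a nonzero linear functional e₁* ∈ (F_q^n)* (for the dual action) are not conjugate subgroups of G. -/
open Matrix

lemma transvection_mulVec {n : Type*} [DecidableEq n] [Fintype n] {K : Type*} [CommRing K]
    (i j : n) (c : K) (v : n → K) (a : n) :
    (Matrix.transvection i j c).mulVec v a = v a + (if a = i then c * v j else 0) := by
  simp only [Matrix.transvection, Matrix.add_mulVec, Matrix.one_mulVec, Pi.add_apply]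
  congr 1
  simp only [Matrix.mulVec, Matrix.single, dotProduct, Matrix.of_apply, ite_and]
  rcases eq_or_ne a i with h | h
  · simp [h]
  · simp [h, Ne.symm h]

/-- For `n ≥ 3`, the stabilizer in `GLₙ(𝔽_q)` of the first standard basis vector `e₁`
and the stabilizer of the first dual basis functional `e₁*` (for the dual action
`(g • φ)(v) = φ(g⁻¹v)`) are not conjugate in `GLₙ(𝔽_q)`. -/
theorem stmt4 (p k n : ℕ) [Fact p.Prime] (hk : k ≠ 0) (hn : 3 ≤ n) :
    let i0 : Fin n := ⟨0, by omega⟩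
    let e₁ : Fin n → GaloisField p k := Pi.single i0 1
    let H : Set (GL (Fin n) (GaloisField p k)) := {g | g.val.mulVec e₁ = e₁}
    let H' : Set (GL (Fin n) (GaloisField p k)) :=
      {g | ∀ v : Fin n → GaloisField p k, ((g⁻¹).val.mulVec v) i0 = v i0}
    ¬ ∃ c : GL (Fin n) (GaloisField p k), (fun x => c * x * c⁻¹) '' H = H' := by
  intro i0 e₁ H H'
  rintro ⟨c, hc⟩
  set w : Fin n → GaloisField p k := c.val.mulVec e₁ with hw
  -- w ≠ 0
  have hwne : w ≠ 0 := by
    intro h0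
    have h2 : (c⁻¹).val.mulVec w = e₁ := by
      rw [hw, Matrix.mulVec_mulVec]
      have h3 : (c⁻¹).val * c.val = 1 := by
        rw [← Units.val_mul, inv_mul_cancel, Units.val_one]
      rw [h3, Matrix.one_mulVec]
    rw [h0] at h2
    have h1 : e₁ i0 = 1 := by simp [e₁]
    rw [← h2] at h1
    simp [Matrix.mulVec_zero] at h1
  -- pick j with w j ≠ 0
  obtain ⟨j, hj⟩ : ∃ j, w j ≠ 0 := by
    by_contra hj
    push_neg at hj
    exact hwne (funext hj)
  -- pick i ≠ 0, i ≠ j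
  set i : Fin n := if j.val = 1 then ⟨2, by omega⟩ else ⟨1, by omega⟩ with hi
  have hii0 : i ≠ i0 := by
    rcases eq_or_ne j.val 1 with h | h <;> simp [hi, h, i0, Fin.ext_iff]
  have hij : i ≠ j := by
    rcases eq_or_ne j.val 1 with h | h <;> simp [hi, h, Fin.ext_iff] <;> omega
  -- the transvection as an element of GL
  have key := Matrix.transvection_mul_transvection_same i j hij (1 : GaloisField p k) (-1)
  have key' := Matrix.transvection_mul_transvection_same i j hij (-1 : GaloisField p k) 1
  set g : GL (Fin n) (GaloisField p k) :=
    ⟨Matrix.transvection i j 1, Matrix.transvection i j (-1), by rw [key]; simp, by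
      rw [key']; simp⟩ with hg
  have hginv : (g⁻¹).val = Matrix.transvection i j (-1) := rfl
  have hgH' : g ∈ H' := by
    intro v
    rw [hginv, transvection_mulVec]
    simp [Ne.symm hii0, hii0]
  -- so g is in the image, hence g fixes w
  rw [← hc] at hgH'
  obtain ⟨h, hh, hgh⟩ := hgH'
  have hfix : g.val.mulVec w = w := by
    rw [← hgh]
    show ((c * h * c⁻¹ : GL (Fin n) (GaloisField p k))).val.mulVec w = w
    rw [hw, Matrix.mulVec_mulVec]
    have h4 : ((c * h * c⁻¹ : GL (Fin n) (GaloisField p k))).val * c.val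
        = c.val * h.val := by
      rw [← Units.val_mul, ← Units.val_mul]
      congr 1
      group
    rw [h4, ← Matrix.mulVec_mulVec, hh]
  have h5 := congrFun hfix i
  rw [show g.val = Matrix.transvection i j 1 from rfl, transvection_mulVec] at h5
  simp at h5
  exact hj h5
end

section
/- Let p = 3 and G = GL_2(F_3). The subgroups H = {[[1,*],[0,*]]} and H' = {[[*,*],[0,1]]} of G each have order 6 and index 8, and they intersect each conjugacy class of G in sets of equal size, yet are not conjugate in G. -/
open Matrix

variable (p : ℕ) [Fact p.Prime]

instance : Fact (Nat.Prime 3) := ⟨by norm_num⟩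

section Aux
abbrev G3 := GL (Fin 2) (ZMod 3)

def wU : G3 := ⟨!![0,1;1,0], !![0,1;1,0], by decide, by decide⟩

def tU (x : G3) : G3 :=
  ⟨x.val.transpose, x.inv.transpose,
    by rw [← Matrix.transpose_mul, x.inv_val, Matrix.transpose_one],
    by rw [← Matrix.transpose_mul, x.val_inv, Matrix.transpose_one]⟩

def psiU (x : G3) : G3 := wU * tU x * wU

lemma psiU_val (x : G3) :
    (psiU x).val = !![x.val 1 1, x.val 0 1; x.val 1 0, x.val 0 0] := by
  show wU.val * x.val.transpose * wU.val = _
  ext i j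
  fin_cases i <;> fin_cases j <;>
    simp [wU, Matrix.mul_apply, Matrix.vecMul, dotProduct, Fin.sum_univ_two,
      Matrix.transpose_apply]

lemma psiU_psiU (x : G3) : psiU (psiU x) = x := by
  apply Units.ext
  rw [psiU_val, psiU_val]
  ext i j
  fin_cases i <;> fin_cases j <;> simp

lemma memH_iff (x : G3) : x ∈ Hsub 3 ↔ (x.val 0 0 = 1 ∧ x.val 1 0 = 0) := Iff.rfl

lemma memH'_iff (x : G3) : x ∈ Hsub' 3 ↔ (x.val 1 0 = 0 ∧ x.val 1 1 = 1) := Iff.rfl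

lemma psiU_mem_iff (x : G3) : psiU x ∈ Hsub' 3 ↔ x ∈ Hsub 3 := by
  rw [memH'_iff, memH_iff, psiU_val]
  simp [and_comm]

lemma psiU_mem_iff' (y : G3) : psiU y ∈ Hsub 3 ↔ y ∈ Hsub' 3 := by
  rw [← psiU_mem_iff (psiU y), psiU_psiU]

-- conjugator for the d = 2 case
lemma cU_mul1 : ∀ b : ZMod 3, !![-b, b^2+1; 1, -b] * !![b, b^2+1; 1, b] = 1 := by decide
lemma cU_mul2 : ∀ b : ZMod 3, !![b, b^2+1; 1, b] * !![-b, b^2+1; 1, -b] = 1 := by decide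
lemma cU_semiconj : ∀ b : ZMod 3,
    !![-b, b^2+1; 1, -b] * !![1, b; 0, 2] = !![2, b; 0, 1] * !![-b, b^2+1; 1, -b] := by decide

def cU (b : ZMod 3) : G3 := ⟨!![-b, b^2+1; 1, -b], !![b, b^2+1; 1, b], cU_mul1 b, cU_mul2 b⟩

lemma keyH (x : G3) (hx : x ∈ Hsub 3) : IsConj x (psiU x) := by
  obtain ⟨h1, h2⟩ := (memH_iff x).mp hx
  have hval := Matrix.eta_fin_two x.val
  rw [h1, h2] at hval
  have hpsi : (psiU x).val = !![x.val 1 1, x.val 0 1; 0, 1] := by rw [psiU_val, h1, h2]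
  have hd : x.val 1 1 ≠ 0 := by
    have hu : IsUnit x.val.det := (Matrix.isUnit_iff_isUnit_det x.val).mp x.isUnit
    rw [Matrix.det_fin_two, h1, h2] at hu
    simp only [one_mul, mul_zero, sub_zero] at hu
    exact hu.ne_zero
  have hcase : x.val 1 1 = 1 ∨ x.val 1 1 = 2 := by
    have : ∀ e : ZMod 3, e ≠ 0 → e = 1 ∨ e = 2 := by decide
    exact this _ hd
  rcases hcase with h | h
  · have : psiU x = x := by
      apply Units.ext
      rw [hpsi, h, hval, h]
      simp
    rw [this]
  · rw [isConj_iff]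
    refine ⟨cU (x.val 0 1), ?_⟩
    rw [mul_inv_eq_iff_eq_mul]
    apply Units.ext
    rw [Units.val_mul, Units.val_mul, hpsi, h]
    show (cU (x.val 0 1)).val * x.val = _
    rw [hval, h]
    exact cU_semiconj (x.val 0 1)

lemma keyH' (y : G3) (hy : y ∈ Hsub' 3) : IsConj y (psiU y) := by
  have hm : psiU y ∈ Hsub 3 := (psiU_mem_iff' y).mpr hy
  have := keyH (psiU y) hm
  rw [psiU_psiU] at this
  exact this.symm

def conjEquiv (g : G3) :
    {x : G3 // x ∈ Hsub 3 ∧ IsConj g x} ≃ {x : G3 // x ∈ Hsub' 3 ∧ IsConj g x} where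
  toFun := fun z => ⟨psiU z.1, (psiU_mem_iff z.1).mpr z.2.1, z.2.2.trans (keyH z.1 z.2.1)⟩
  invFun := fun z => ⟨psiU z.1, (psiU_mem_iff' z.1).mpr z.2.1, z.2.2.trans (keyH' z.1 z.2.1)⟩
  left_inv := fun z => Subtype.ext (psiU_psiU z.1)
  right_inv := fun z => Subtype.ext (psiU_psiU z.1)

end Aux

section Card

lemma hElem_mul1 : ∀ b : ZMod 3, ∀ d : (ZMod 3)ˣ,
    !![1, b; 0, d.val] * !![1, -b * (d⁻¹).val; 0, (d⁻¹).val] = 1 := by decide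
lemma hElem_mul2 : ∀ b : ZMod 3, ∀ d : (ZMod 3)ˣ,
    !![1, -b * (d⁻¹).val; 0, (d⁻¹).val] * !![1, b; 0, d.val] = 1 := by decide

def hElem (b : ZMod 3) (d : (ZMod 3)ˣ) : G3 :=
  ⟨!![1, b; 0, d.val], !![1, -b * (d⁻¹).val; 0, (d⁻¹).val], hElem_mul1 b d, hElem_mul2 b d⟩

lemma dUnit_aux (x : G3) (h1 : x.val 0 0 = 1) (h2 : x.val 1 0 = 0) :
    x.val 1 1 * (x.val)⁻¹ 1 1 = 1 ∧ (x.val)⁻¹ 1 1 * x.val 1 1 = 1 := by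
  have hv := congrArg (fun M => M 1 1) x.val_inv
  have hi10 := congrArg (fun M => M 1 0) x.inv_val
  have hi := congrArg (fun M => M 1 1) x.inv_val
  simp [Matrix.mul_apply, Fin.sum_univ_two, h1, h2] at hv hi10 hi
  exact ⟨hv, by rw [hi10] at hi; simpa using hi⟩

noncomputable def dUnit (x : G3) (h1 : x.val 0 0 = 1) (h2 : x.val 1 0 = 0) : (ZMod 3)ˣ :=
  ⟨x.val 1 1, (x.val)⁻¹ 1 1, (dUnit_aux x h1 h2).1, (dUnit_aux x h1 h2).2⟩

noncomputable def hEquiv : ZMod 3 × (ZMod 3)ˣ ≃ ↥(Hsub 3) where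
  toFun p := ⟨hElem p.1 p.2, (memH_iff _).mpr ⟨rfl, rfl⟩⟩
  invFun z :=
    (z.1.val 0 1, dUnit z.1 ((memH_iff _).mp z.2).1 ((memH_iff _).mp z.2).2)
  left_inv := fun p => by
    refine Prod.ext ?_ (Units.ext ?_)
    · show (hElem p.1 p.2).val 0 1 = p.1
      rfl
    · show (hElem p.1 p.2).val 1 1 = p.2.val
      rfl
  right_inv := fun z => by
    obtain ⟨h1, h2⟩ := (memH_iff z.1).mp z.2
    refine Subtype.ext (Units.ext ?_)
    show !![1, z.1.val 0 1; 0, z.1.val 1 1] = z.1.val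
    rw [Matrix.eta_fin_two z.1.val, h1, h2]
    simp

def hEquiv' : ↥(Hsub 3) ≃ ↥(Hsub' 3) where
  toFun z := ⟨psiU z.1, (psiU_mem_iff z.1).mpr z.2⟩
  invFun z := ⟨psiU z.1, (psiU_mem_iff' z.1).mpr z.2⟩
  left_inv := fun z => Subtype.ext (psiU_psiU z.1)
  right_inv := fun z => Subtype.ext (psiU_psiU z.1)

lemma cardH_s18 : Nat.card (Hsub 3) = 6 := by
  rw [← Nat.card_congr hEquiv, Nat.card_eq_fintype_card]
  decide

lemma cardH'_s18 : Nat.card (Hsub' 3) = 6 := by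
  rw [← Nat.card_congr hEquiv', cardH_s18]

lemma cardG : Nat.card (GL (Fin 2) (ZMod 3)) = 48 := by
  rw [Matrix.card_GL_field]
  simp [Fin.prod_univ_two]

end Card

def h1U : G3 := ⟨!![2,0;0,1], !![2,0;0,1], by decide, by decide⟩
def h2U : G3 := ⟨!![1,1;0,1], !![1,2;0,1], by decide, by decide⟩


/-- In `G = GL₂(𝔽₃)` (of order 48), the subgroups `H = [[1,*],[0,*]]` and
`H' = [[*,*],[0,1]]` both have order 6 and index 8, meet every conjugacy class of `G`
in sets of equal size, yet are not conjugate in `G`. -/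
theorem stmt18 :
    Nat.card (GL (Fin 2) (ZMod 3)) = 48 ∧
    Nat.card (Hsub 3) = 6 ∧ Nat.card (Hsub' 3) = 6 ∧
    (Hsub 3).index = 8 ∧ (Hsub' 3).index = 8 ∧
    (∀ g : GL (Fin 2) (ZMod 3),
      Nat.card {x : GL (Fin 2) (ZMod 3) // x ∈ Hsub 3 ∧ IsConj g x} =
        Nat.card {x : GL (Fin 2) (ZMod 3) // x ∈ Hsub' 3 ∧ IsConj g x}) ∧
    ¬ ∃ g : GL (Fin 2) (ZMod 3),
        (fun x => g * x * g⁻¹) '' (Hsub 3 : Set (GL (Fin 2) (ZMod 3)))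
          = (Hsub' 3 : Set (GL (Fin 2) (ZMod 3))) := by
  have hidx : (Hsub 3).index = 8 := by
    have h := (Hsub 3).card_mul_index
    rw [cardH_s18, cardG] at h
    omega
  have hidx' : (Hsub' 3).index = 8 := by
    have h := (Hsub' 3).card_mul_index
    rw [cardH'_s18, cardG] at h
    omega
  refine ⟨cardG, cardH_s18, cardH'_s18, hidx, hidx', fun g => Nat.card_congr (conjEquiv g), ?_⟩
  rintro ⟨g, hg⟩
  -- every element of H' fixes the vector v := g *ᵥ ![1,0]
  have hfix : ∀ h : G3, h ∈ Hsub' 3 →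
      h.val *ᵥ (g.val *ᵥ ![1,0]) = g.val *ᵥ ![1,0] := by
    intro h hh
    have : h ∈ (fun x => g * x * g⁻¹) '' (Hsub 3 : Set G3) := by rw [hg]; exact hh
    obtain ⟨a, ha, hae⟩ := this
    have hcomm : h * g = g * a := by rw [← hae]; group
    have haval : a.val *ᵥ ![1,0] = ![1,0] := by
      obtain ⟨h1, h2⟩ := (memH_iff a).mp ha
      funext i
      fin_cases i <;> simp [Matrix.mulVec, dotProduct, Fin.sum_univ_two, h1, h2]
    have := congrArg Units.val hcomm
    rw [Units.val_mul, Units.val_mul] at this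
    calc h.val *ᵥ (g.val *ᵥ ![1,0]) = (h.val * g.val) *ᵥ ![1,0] := by
          rw [Matrix.mulVec_mulVec]
      _ = (g.val * a.val) *ᵥ ![1,0] := by rw [this]
      _ = g.val *ᵥ (a.val *ᵥ ![1,0]) := by rw [Matrix.mulVec_mulVec]
      _ = g.val *ᵥ ![1,0] := by rw [haval]
  set v := g.val *ᵥ ![1,0] with hv
  have e1 : h1U.val *ᵥ v = v := hfix h1U (by exact ⟨by decide, by decide⟩)
  have e2 : h2U.val *ᵥ v = v := hfix h2U (by exact ⟨by decide, by decide⟩)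
  have hv0 : v 0 = 0 := by
    have := congrFun e1 0
    simp [h1U, Matrix.mulVec, dotProduct, Fin.sum_univ_two] at this
    linear_combination this
  have hv1 : v 1 = 0 := by
    have := congrFun e2 0
    simp [h2U, Matrix.mulVec, dotProduct, Fin.sum_univ_two, hv0] at this
    linear_combination this
  have hvz : v = 0 := by funext i; fin_cases i <;> simp [hv0, hv1]
  have : (![1,0] : Fin 2 → ZMod 3) = 0 := by
    have h := congrArg Units.val (inv_mul_cancel g)
    rw [Units.val_mul] at h
    calc (![1,0] : Fin 2 → ZMod 3) = (1 : Matrix (Fin 2) (Fin 2) (ZMod 3)) *ᵥ ![1,0] := by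
          simp
      _ = (g⁻¹.val * g.val) *ᵥ ![1,0] := by rw [h, Units.val_one]
      _ = g⁻¹.val *ᵥ v := by rw [← Matrix.mulVec_mulVec, hv]
      _ = 0 := by rw [hvz]; simp
  have := congrFun this 0
  simp at this
end
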